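/- Let E be a standard Borel space, (F, 𝓕) a measurable space, T : E → F measurable and surjective, and K a transition kernel on E reversible with respect to a probability measure π. Then for every f ∈ L²_{T_*π}: ∫_{F×F} (f(y) − f(y'))² ν_{T_*K}(dy dy') = ∫_{E×E} (f(T(x)) − f(T(x')))² ν_K(dx dx'). Consequently, if (X_k) is a Markov chain with transition kernel K and initial distribution π, and (Y_k) is a Markov chain with transition kernel T_*K and initial distribution T_*π, then Corr(f∘T(X_k), f∘T(X_{k+1})) = Corr(f(Y_k), f(Y_{k+1})). -/

import Mathlib

open MeasureTheory ProbabilityTheory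
open scoped ENNReal NNReal

/-- The pushforward transition kernel `T_*K(y, B) := E[K(X, T⁻¹(B)) | T(X) = y]`, `X ∼ π`,
realized via a regular conditional distribution `condDistrib id T π` of `X` given `T(X)`. -/
noncomputable def pushKernel {E F : Type*} [MeasurableSpace E] [StandardBorelSpace E] [Nonempty E]
    [MeasurableSpace F] (T : E → F) (π : Measure E) [IsFiniteMeasure π] (K : Kernel E E) :
    Kernel F F :=
  Kernel.map (K ∘ₖ condDistrib id T π) T

/-- A transition kernel `K` is reversible w.r.t. `π` if the measure `ν_K(dx dx') := K(x, dx') π(dx)`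
on `E × E` is invariant under the coordinate swap `(x, x') ↦ (x', x)`. -/
def IsReversible {E : Type*} [MeasurableSpace E] (π : Measure E) (K : Kernel E E) : Prop :=
  (π ⊗ₘ K).map Prod.swap = π ⊗ₘ K

/-- Correlation of two real random variables on a probability space. -/
noncomputable def corr {Ω : Type*} [MeasurableSpace Ω] (Pr : Measure Ω) (g h : Ω → ℝ) : ℝ :=
  ((∫ ω, g ω * h ω ∂Pr) - (∫ ω, g ω ∂Pr) * (∫ ω, h ω ∂Pr)) /
    (Real.sqrt (variance g Pr) * Real.sqrt (variance h Pr))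

/-! Disintegrating `π` along `T` identifies `T_*π ⊗ condDistrib id T π` with the law of
`(T X, X)`, so `ν_{T_*K}` is exactly the image of `ν_K` under `T × T`. Both claims are then changes
of variables along `T × T`; reversibility makes the second marginal of `ν_K` equal to `π`, so that
`f(y')`, like `f(y)`, is a.e.-measurable for `ν_{T_*K}`. -/

namespace MeasureTheory.Measure

variable {α β γ δ : Type*} [MeasurableSpace α] [MeasurableSpace β] [MeasurableSpace γ]
  [MeasurableSpace δ]

lemma fst_map_prodMap (ρ : Measure (α × β)) {f : α → γ} {g : β → δ} (hf : Measurable f)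
    (hg : Measurable g) : (ρ.map (Prod.map f g)).fst = ρ.fst.map f := by
  rw [Measure.fst, Measure.fst, map_map measurable_fst (hf.prodMap hg), map_map hf measurable_fst]
  rfl

lemma snd_map_prodMap (ρ : Measure (α × β)) {f : α → γ} {g : β → δ} (hf : Measurable f)
    (hg : Measurable g) : (ρ.map (Prod.map f g)).snd = ρ.snd.map g := by
  rw [Measure.snd, Measure.snd, map_map measurable_snd (hf.prodMap hg), map_map hg measurable_snd]
  rfl

lemma parallelComp_id_comp_map_prodMk (μ : Measure α) [SFinite μ] (κ : Kernel α β)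
    [IsSFiniteKernel κ] {f : α → γ} (hf : Measurable f) :
    (Kernel.id ∥ₖ κ) ∘ₘ μ.map (fun x => (f x, x)) = (μ ⊗ₘ κ).map (Prod.map f id) := by
  ext s hs
  rw [bind_apply hs (by fun_prop), map_apply (by fun_prop) hs,
    compProd_apply (hf.prodMap measurable_id hs),
    lintegral_map (Kernel.measurable_coe _ hs) (by fun_prop)]
  refine lintegral_congr fun x => ?_
  rw [Kernel.parallelComp_apply, Kernel.id_apply, prod_apply hs,
    lintegral_dirac' _ (measurable_measure_prodMk_left hs)]
  rfl

end MeasureTheory.Measure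

lemma IsReversible.snd_compProd {α : Type*} [MeasurableSpace α] {π : Measure α} [SFinite π]
    {K : Kernel α α} [IsMarkovKernel K] (h : IsReversible π K) : (π ⊗ₘ K).snd = π := by
  rw [← h, Measure.snd_map_swap, Measure.fst_compProd]

lemma compProd_pushKernel {E F : Type*} [MeasurableSpace E] [StandardBorelSpace E] [Nonempty E]
    [MeasurableSpace F] {T : E → F} (hT : Measurable T) (π : Measure E) [IsFiniteMeasure π]
    (K : Kernel E E) [IsSFiniteKernel K] :
    π.map T ⊗ₘ pushKernel T π K = (π ⊗ₘ K).map (Prod.map T T) := by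
  calc π.map T ⊗ₘ pushKernel T π K
      = (π.map T ⊗ₘ (K ∘ₖ condDistrib id T π)).map (Prod.map id T) := Measure.compProd_map hT
    _ = ((Kernel.id ∥ₖ K) ∘ₘ (π.map T ⊗ₘ condDistrib id T π)).map (Prod.map id T) := by
      rw [Measure.parallelComp_comp_compProd]
    _ = ((π ⊗ₘ K).map (Prod.map T id)).map (Prod.map id T) := by
      rw [compProd_map_condDistrib aemeasurable_id]
      exact congrArg _ (Measure.parallelComp_id_comp_map_prodMk π K hT)
    _ = (π ⊗ₘ K).map (Prod.map T T) := Measure.map_map (by fun_prop) (by fun_prop)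

section Correlation

variable {Ω α β : Type*} [MeasurableSpace Ω] [MeasurableSpace α] [MeasurableSpace β]

lemma corr_map {μ : Measure Ω} {g : Ω → α} (hg : AEMeasurable g μ) {u v : α → ℝ}
    (hu : AEStronglyMeasurable u (μ.map g)) (hv : AEStronglyMeasurable v (μ.map g)) :
    corr (μ.map g) u v = corr μ (u ∘ g) (v ∘ g) := by
  rw [corr, corr, integral_map hg hu, integral_map hg hv,
    integral_map (f := fun a => u a * v a) hg (hu.mul hv),
    variance_map hu.aemeasurable hg, variance_map hv.aemeasurable hg]
  rfl

lemma corr_eq_of_map_prodMk_eq {Pr : Measure Ω} {X : Ω → α} {Y : Ω → β} {ρ : Measure (α × β)}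
    [NeZero ρ] (h : Pr.map (fun ω => (X ω, Y ω)) = ρ) {u : α → ℝ} {v : β → ℝ}
    (hu : AEStronglyMeasurable u ρ.fst) (hv : AEStronglyMeasurable v ρ.snd) :
    corr Pr (fun ω => u (X ω)) (fun ω => v (Y ω)) = corr ρ (fun p => u p.1) (fun p => v p.2) := by
  subst h
  exact (corr_map (aemeasurable_of_map_neZero inferInstance) (hu.comp_measurable measurable_fst)
    (hv.comp_measurable measurable_snd)).symm

end Correlation

theorem jump_corr_pushforward_general
    {E F : Type*} [MeasurableSpace E] [StandardBorelSpace E] [Nonempty E] [MeasurableSpace F]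
    (T : E → F) (hT : Measurable T)
    (π : Measure E) [IsProbabilityMeasure π] (K : Kernel E E) [IsMarkovKernel K]
    (hrev : IsReversible π K)
    (f : F → ℝ) (hf : MemLp f 2 (π.map T)) :
    (∫ q, (f q.1 - f q.2) ^ 2 ∂((π.map T) ⊗ₘ pushKernel T π K)
        = ∫ p, (f (T p.1) - f (T p.2)) ^ 2 ∂(π ⊗ₘ K)) ∧
      (∀ {Ω Ω' : Type} [MeasurableSpace Ω] [MeasurableSpace Ω']
          (Pr : Measure Ω) (Qr : Measure Ω') [IsProbabilityMeasure Pr] [IsProbabilityMeasure Qr]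
          (Xk Xk1 : Ω → E) (Yk Yk1 : Ω' → F),
        Pr.map (fun ω => (Xk ω, Xk1 ω)) = π ⊗ₘ K →
        Qr.map (fun ω => (Yk ω, Yk1 ω)) = (π.map T) ⊗ₘ pushKernel T π K →
        corr Pr (fun ω => f (T (Xk ω))) (fun ω => f (T (Xk1 ω)))
          = corr Qr (fun ω => f (Yk ω)) (fun ω => f (Yk1 ω))) := by
  rw [compProd_pushKernel hT]
  set ρ := (π ⊗ₘ K).map (Prod.map T T) with hρ
  have hρ_fst : ρ.fst = π.map T := by
    rw [hρ, Measure.fst_map_prodMap _ hT hT, Measure.fst_compProd]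
  have hρ_snd : ρ.snd = π.map T := by
    rw [hρ, Measure.snd_map_prodMap _ hT hT, hrev.snd_compProd]
  have hf₁ : AEStronglyMeasurable f ρ.fst := hρ_fst ▸ hf.1
  have hf₂ : AEStronglyMeasurable f ρ.snd := hρ_snd ▸ hf.1
  have : IsProbabilityMeasure ρ := Measure.isProbabilityMeasure_map (hT.prodMap hT).aemeasurable
  refine ⟨?_, ?_⟩
  · rw [hρ, integral_map (f := fun q : F × F => (f q.1 - f q.2) ^ 2) (hT.prodMap hT).aemeasurable
      (((hf₁.comp_measurable measurable_fst).sub (hf₂.comp_measurable measurable_snd)).pow 2)]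
    rfl
  · intro Ω Ω' _ _ Pr Qr _ _ Xk Xk1 Yk Yk1 hX hY
    have hTX : Pr.map (fun ω => (T (Xk ω), T (Xk1 ω))) = ρ := by
      rw [hρ, ← hX, AEMeasurable.map_map_of_aemeasurable (hT.prodMap hT).aemeasurable
        (aemeasurable_of_map_neZero (hX ▸ inferInstance))]
      rfl
    rw [corr_eq_of_map_prodMk_eq hTX hf₁ hf₂, corr_eq_of_map_prodMk_eq hY hf₁ hf₂]

/-- For `K` reversible w.r.t. `π` and every `f ∈ L²_{T_*π}`, the expected squared
jumps of `f` under the stationary transition measure of `T_*K` and of `f ∘ T` under that of `K`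
coincide.  Consequently, for a Markov chain `(X_k, X_{k+1})` in stationarity with kernel `K` and
initial distribution `π` (i.e. with joint law `π ⊗ₘ K`) and a Markov chain `(Y_k, Y_{k+1})` in
stationarity with kernel `T_*K` and initial distribution `T_*π`, the lag-one correlations of
`f ∘ T` along `(X_k)` and of `f` along `(Y_k)` coincide. -/
theorem jump_corr_pushforward
    {E F : Type*} [MeasurableSpace E] [StandardBorelSpace E] [Nonempty E] [MeasurableSpace F]
    (T : E → F) (hT : Measurable T) (hTsurj : Function.Surjective T)
    (π : Measure E) [IsProbabilityMeasure π] (K : Kernel E E) [IsMarkovKernel K]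
    (hrev : IsReversible π K)
    (f : F → ℝ) (hf : MemLp f 2 (π.map T)) :
    (∫ q, (f q.1 - f q.2) ^ 2 ∂((π.map T) ⊗ₘ pushKernel T π K)
        = ∫ p, (f (T p.1) - f (T p.2)) ^ 2 ∂(π ⊗ₘ K)) ∧
      (∀ {Ω Ω' : Type} [MeasurableSpace Ω] [MeasurableSpace Ω']
          (Pr : Measure Ω) (Qr : Measure Ω') [IsProbabilityMeasure Pr] [IsProbabilityMeasure Qr]
          (Xk Xk1 : Ω → E) (Yk Yk1 : Ω' → F),
        Pr.map (fun ω => (Xk ω, Xk1 ω)) = π ⊗ₘ K →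
        Qr.map (fun ω => (Yk ω, Yk1 ω)) = (π.map T) ⊗ₘ pushKernel T π K →
        corr Pr (fun ω => f (T (Xk ω))) (fun ω => f (T (Xk1 ω)))
          = corr Qr (fun ω => f (Yk ω)) (fun ω => f (Yk1 ω))) :=
  jump_corr_pushforward_general T hT π K hrev f hf
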